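/- arXiv:2402.08620 — 6 statements merged into one kernel-verified Lean document; each statement's English description precedes it below -/
import Mathlib

section
/- For positive reals ι, α, C_D, η, κ, the quantity λ₊ = (-(ι C_D + α) + sqrt((ι C_D - α)² + 4 α C_D η ι / κ))/2 satisfies λ₊ ≥ 0 if and only if κ ≤ η. -/
theorem stmt_1 (ι α CD η κ : ℝ)
    (hι : 0 < ι) (hα : 0 < α) (hCD : 0 < CD) (hη : 0 < η) (hκ : 0 < κ) :
    0 ≤ (-(ι * CD + α) + Real.sqrt ((ι * CD - α) ^ 2 + 4 * α * CD * η * ι / κ)) / 2 ↔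
      κ ≤ η := by
  have hx : (0:ℝ) ≤ ι * CD + α := by positivity
  have h1 : 0 ≤ (-(ι * CD + α) + Real.sqrt ((ι * CD - α) ^ 2 + 4 * α * CD * η * ι / κ)) / 2
      ↔ ι * CD + α ≤ Real.sqrt ((ι * CD - α) ^ 2 + 4 * α * CD * η * ι / κ) := by
    constructor <;> intro h <;> linarith
  rw [h1, Real.le_sqrt hx (by positivity)]
  have h2 : (ι*CD+α)^2 ≤ (ι*CD-α)^2 + 4*α*CD*η*ι/κ ↔ 4*ι*CD*α ≤ 4*α*CD*η*ι/κ := by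
    constructor <;> intro h <;> nlinarith
  rw [h2, le_div_iff₀ hκ]
  constructor <;> intro h <;> nlinarith [mul_pos hι (mul_pos hCD hα)]
end

section
/- For nonnegative reals C, C_D (not both zero) and positive parameters ι, α, η, κ, the quantity ε₊ = (−(ι(C + C_D) + α) + sqrt(4 α C η ι + (ι(C + C_D) − α)² + 4 α C_D η ι / κ))/2 satisfies ε₊ ≥ 0 if and only if (η − 1)·C ≥ (1 − η/κ)·C_D. -/
theorem stmt_3 (ι α C CD η κ : ℝ)
    (hι : 0 < ι) (hα : 0 < α) (hη : 0 < η) (hκ : 0 < κ)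
    (hC : 0 ≤ C) (hCD : 0 ≤ CD) (hne : ¬ (C = 0 ∧ CD = 0)) :
    0 ≤ (-(ι * (C + CD) + α) +
        Real.sqrt (4 * α * C * η * ι + (ι * (C + CD) - α) ^ 2 + 4 * α * CD * η * ι / κ)) / 2 ↔
      (1 - η / κ) * CD ≤ (η - 1) * C := by
  have hq : 4 * α * CD * η * ι / κ = 4 * α * CD * (η / κ) * ι := by
    field_simp
  set q := η / κ with hqdef
  have hq0 : 0 < q := div_pos hη hκ
  have hs : 0 < ι * (C + CD) + α := by nlinarith
  have hD : 0 ≤ 4 * α * C * η * ι + (ι * (C + CD) - α) ^ 2 + 4 * α * CD * η * ι / κ := by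
    rw [hq]; positivity
  have hsq : (0:ℝ) ≤ (-(ι * (C + CD) + α) +
      Real.sqrt (4 * α * C * η * ι + (ι * (C + CD) - α) ^ 2 + 4 * α * CD * η * ι / κ)) / 2 ↔
      (ι * (C + CD) + α) ^ 2 ≤
        4 * α * C * η * ι + (ι * (C + CD) - α) ^ 2 + 4 * α * CD * η * ι / κ := by
    rw [div_nonneg_iff]
    constructor
    · rintro (⟨h, -⟩ | ⟨-, h⟩)
      · have h' : ι * (C + CD) + α ≤ Real.sqrt (4 * α * C * η * ι +
              (ι * (C + CD) - α) ^ 2 + 4 * α * CD * η * ι / κ) := by linarith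
        calc (ι * (C + CD) + α) ^ 2 ≤ (Real.sqrt (4 * α * C * η * ι +
              (ι * (C + CD) - α) ^ 2 + 4 * α * CD * η * ι / κ)) ^ 2 := by
              apply pow_le_pow_left₀ hs.le h'
          _ = _ := Real.sq_sqrt hD
      · norm_num at h
    · intro h
      left
      constructor
      · have := (Real.le_sqrt hs.le hD).mpr h
        linarith
      · norm_num
  rw [hsq, hq]
  constructor
  · intro h
    nlinarith [mul_pos hα hι, mul_nonneg (mul_nonneg hα.le hι.le) hCD, mul_nonneg (mul_nonneg hα.le hι.le) hC]
  · intro h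
    nlinarith [mul_pos hα hι]
end

section
/- If 0 < B < 1 + β (with β ∈ [0,1], δ > 1, C, C_D ≥ 0 not both zero, ι, α > 0), then ε₊ < 0, i.e. the eigenvalue ε₊ = (−(ι(C+C_D)+α) + sqrt(4αCηι + (ι(C+C_D)−α)² + 4αC_D η ι/κ))/2 with η = B/(1+β), κ = 1+δ/(1+β) is strictly negative. -/
theorem stmt_5 (B β δ ι α C CD η κ : ℝ)
    (hB0 : 0 < B) (hB : B < 1 + β) (hβ0 : 0 ≤ β) (hβ1 : β ≤ 1) (hδ : 1 < δ)
    (hι : 0 < ι) (hα : 0 < α)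
    (hC : 0 ≤ C) (hCD : 0 ≤ CD) (hne : ¬ (C = 0 ∧ CD = 0))
    (hη : η = B / (1 + β)) (hκ : κ = 1 + δ / (1 + β)) :
    (-(ι * (C + CD) + α) +
        Real.sqrt (4 * α * C * η * ι + (ι * (C + CD) - α) ^ 2 + 4 * α * CD * η * ι / κ)) / 2
      < 0 := by
  have h1β : (0:ℝ) < 1 + β := by linarith
  have hη0 : 0 < η := by rw [hη]; positivity
  have hη1 : η < 1 := by rw [hη]; exact (div_lt_one h1β).mpr hB
  have hκ1 : 1 < κ := by
    rw [hκ]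
    have : 0 < δ / (1 + β) := div_pos (by linarith) h1β
    linarith
  have hsum : 0 < C + CD := by
    rcases hC.eq_or_lt with h | h
    · rcases hCD.eq_or_lt with h' | h'
      · exact absurd ⟨h.symm, h'.symm⟩ hne
      · linarith
    · linarith
  have hdiv : 4 * α * CD * η * ι / κ ≤ 4 * α * CD * η * ι :=
    div_le_self (by positivity) (le_of_lt hκ1)
  have key : 4 * α * C * η * ι + 4 * α * CD * η * ι / κ < 4 * α * ι * C + 4 * α * ι * CD := by
    rcases hCD.eq_or_lt with h | h
    · have hC0 : 0 < C := by linarith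
      rw [← h]
      simp only [mul_zero, zero_mul, zero_div]
      nlinarith [mul_pos (mul_pos (mul_pos hα hι) hC0) (sub_pos.mpr hη1)]
    · have hdiv' : 4 * α * CD * η * ι / κ < 4 * α * CD * η * ι :=
        div_lt_self (by positivity) hκ1
      nlinarith [mul_nonneg (mul_nonneg (mul_nonneg hα.le hι.le) hC) (sub_pos.mpr hη1).le,
        mul_pos (mul_pos (mul_pos hα hι) h) (sub_pos.mpr hη1)]
  have hy : 0 < ι * (C + CD) + α := by positivity
  have hs : Real.sqrt (4 * α * C * η * ι + (ι * (C + CD) - α) ^ 2 + 4 * α * CD * η * ι / κ)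
      < ι * (C + CD) + α := by
    rw [Real.sqrt_lt' hy]
    nlinarith [key]
  linarith
end

section
/- Suppose a solution of the HV–DVG system satisfies C(t*) = C_V(t*) = C_D(t*) = C_{DV}(t*) = 0 at some time t*, with initial data C(0) = C₀, C_V(0) = C_D(0) = C_{DV}(0) = 0, V(0) = V₀, D(0) = D₀. Then, with I_V = ∫₀^{t*} αC_V dt and I_{DV} = ∫₀^{t*} αC_{DV} dt, one has I_V + I_{DV} = C₀, V(t*) = V₀ − C₀ + η I_V + (η/κ) I_{DV}, and D(t*) = D₀ − C₀ + (βη + 1) I_V + (η/κ)(β + δ) I_{DV}. -/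
/-! The infection terms `ι·(…)` cancel in three combinations: the total complex concentration
`C + CD + CV + CDV`, the total virus `V + CV + CDV` and the total DVG `D + CD + CDV`. Their
derivatives are linear combinations of `α CV` and `α CDV` alone, so integrating them over `[0, t*]`
and reading off the boundary values gives the three identities. -/

open intervalIntegral

theorem sub_eq_mul_integral_add_mul_integral {F f g : ℝ → ℝ} {p q a b : ℝ}
    (hf : Continuous f) (hg : Continuous g) (hF : ∀ t, HasDerivAt F (p * f t + q * g t) t) :
    F b - F a = p * (∫ t in a..b, f t) + q * ∫ t in a..b, g t := by
  have hpf := (hf.intervalIntegrable (μ := MeasureTheory.volume) a b).const_mul p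
  have hqg := (hg.intervalIntegrable (μ := MeasureTheory.volume) a b).const_mul q
  rw [← integral_const_mul, ← integral_const_mul, ← integral_add hpf hqg,
    integral_eq_sub_of_hasDerivAt (fun t _ => hF t) (hpf.add hqg)]

section Balance

variable {ι α η κ β δ t : ℝ} {C CV CD CDV V D : ℝ → ℝ}

theorem hasDerivAt_complexTotal
    (hC : HasDerivAt C (-(ι * C t * (V t + D t))) t)
    (hCV : HasDerivAt CV (ι * C t * V t - CV t * (ι * D t + α)) t)
    (hCD : HasDerivAt CD (ι * (C t * D t - CD t * V t)) t)
    (hCDV : HasDerivAt CDV (ι * (CD t * V t + CV t * D t) - α * CDV t) t) :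
    HasDerivAt (fun s => C s + CD s + CV s + CDV s)
      ((-1) * (α * CV t) + (-1) * (α * CDV t)) t := by
  exact (((hC.add hCD).add hCV).add hCDV).congr_deriv (by ring)

theorem hasDerivAt_virusTotal
    (hCV : HasDerivAt CV (ι * C t * V t - CV t * (ι * D t + α)) t)
    (hCDV : HasDerivAt CDV (ι * (CD t * V t + CV t * D t) - α * CDV t) t)
    (hV : HasDerivAt V (α * η * (CV t + CDV t / κ) - ι * V t * (C t + CD t)) t) :
    HasDerivAt (fun s => V s + CV s + CDV s)
      ((η - 1) * (α * CV t) + (η / κ - 1) * (α * CDV t)) t := by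
  exact ((hV.add hCV).add hCDV).congr_deriv (by ring)

theorem hasDerivAt_dvgTotal
    (hCD : HasDerivAt CD (ι * (C t * D t - CD t * V t)) t)
    (hCDV : HasDerivAt CDV (ι * (CD t * V t + CV t * D t) - α * CDV t) t)
    (hD : HasDerivAt D
      (α * β * η * (CV t + CDV t / κ) + α * δ * η * (CDV t / κ) - ι * D t * (C t + CV t)) t) :
    HasDerivAt (fun s => D s + CD s + CDV s)
      ((β * η) * (α * CV t) + ((η / κ) * (β + δ) - 1) * (α * CDV t)) t := by
  exact ((hD.add hCD).add hCDV).congr_deriv (by ring)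

end Balance

theorem stmt_11_general (ι α η κ β δ : ℝ)
    (C CV CD CDV V D : ℝ → ℝ) (tstar C0 V0 D0 : ℝ)
    (hC : ∀ t, HasDerivAt C (-(ι * C t * (V t + D t))) t)
    (hCV : ∀ t, HasDerivAt CV (ι * C t * V t - CV t * (ι * D t + α)) t)
    (hCD : ∀ t, HasDerivAt CD (ι * (C t * D t - CD t * V t)) t)
    (hCDV : ∀ t, HasDerivAt CDV (ι * (CD t * V t + CV t * D t) - α * CDV t) t)
    (hV : ∀ t, HasDerivAt V (α * η * (CV t + CDV t / κ) - ι * V t * (C t + CD t)) t)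
    (hD : ∀ t, HasDerivAt D
      (α * β * η * (CV t + CDV t / κ) + α * δ * η * (CDV t / κ) - ι * D t * (C t + CV t)) t)
    (hC0 : C 0 = C0) (hCV0 : CV 0 = 0) (hCD0 : CD 0 = 0) (hCDV0 : CDV 0 = 0)
    (hV0 : V 0 = V0) (hD0 : D 0 = D0)
    (hCt : C tstar = 0) (hCVt : CV tstar = 0) (hCDt : CD tstar = 0) (hCDVt : CDV tstar = 0) :
    (∫ t in (0:ℝ)..tstar, α * CV t) + (∫ t in (0:ℝ)..tstar, α * CDV t) = C0 ∧
    V tstar = V0 - C0 + η * (∫ t in (0:ℝ)..tstar, α * CV t)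
      + (η / κ) * (∫ t in (0:ℝ)..tstar, α * CDV t) ∧
    D tstar = D0 - C0 + (β * η + 1) * (∫ t in (0:ℝ)..tstar, α * CV t)
      + (η / κ) * (β + δ) * (∫ t in (0:ℝ)..tstar, α * CDV t) := by
  have hαCV : Continuous fun t => α * CV t :=
    continuous_const.mul (Differentiable.continuous fun t => (hCV t).differentiableAt)
  have hαCDV : Continuous fun t => α * CDV t :=
    continuous_const.mul (Differentiable.continuous fun t => (hCDV t).differentiableAt)
  have hComplex := sub_eq_mul_integral_add_mul_integral (a := 0) (b := tstar) hαCV hαCDV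
    fun t => hasDerivAt_complexTotal (hC t) (hCV t) (hCD t) (hCDV t)
  have hVirus := sub_eq_mul_integral_add_mul_integral (a := 0) (b := tstar) hαCV hαCDV
    fun t => hasDerivAt_virusTotal (hCV t) (hCDV t) (hV t)
  have hDvg := sub_eq_mul_integral_add_mul_integral (a := 0) (b := tstar) hαCV hαCDV
    fun t => hasDerivAt_dvgTotal (hCD t) (hCDV t) (hD t)
  simp only [hCt, hCVt, hCDt, hCDVt, hC0, hCV0, hCD0, hCDV0, hV0, hD0] at hComplex hVirus hDvg
  refine ⟨by linarith, by linarith, by linarith⟩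

theorem stmt_11 (ι α η κ β δ : ℝ)
    (hι : 0 < ι) (hα : 0 < α) (hη : 0 < η) (hκ : 0 < κ) (hβ : 0 < β) (hδ : 0 < δ)
    (C CV CD CDV V D : ℝ → ℝ) (tstar C0 V0 D0 : ℝ) (htstar : 0 ≤ tstar)
    (hC : ∀ t, HasDerivAt C (-(ι * C t * (V t + D t))) t)
    (hCV : ∀ t, HasDerivAt CV (ι * C t * V t - CV t * (ι * D t + α)) t)
    (hCD : ∀ t, HasDerivAt CD (ι * (C t * D t - CD t * V t)) t)
    (hCDV : ∀ t, HasDerivAt CDV (ι * (CD t * V t + CV t * D t) - α * CDV t) t)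
    (hV : ∀ t, HasDerivAt V (α * η * (CV t + CDV t / κ) - ι * V t * (C t + CD t)) t)
    (hD : ∀ t, HasDerivAt D
      (α * β * η * (CV t + CDV t / κ) + α * δ * η * (CDV t / κ) - ι * D t * (C t + CV t)) t)
    (hC0 : C 0 = C0) (hCV0 : CV 0 = 0) (hCD0 : CD 0 = 0) (hCDV0 : CDV 0 = 0)
    (hV0 : V 0 = V0) (hD0 : D 0 = D0)
    (hCt : C tstar = 0) (hCVt : CV tstar = 0) (hCDt : CD tstar = 0) (hCDVt : CDV tstar = 0) :
    (∫ t in (0:ℝ)..tstar, α * CV t) + (∫ t in (0:ℝ)..tstar, α * CDV t) = C0 ∧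
    V tstar = V0 - C0 + η * (∫ t in (0:ℝ)..tstar, α * CV t)
      + (η / κ) * (∫ t in (0:ℝ)..tstar, α * CDV t) ∧
    D tstar = D0 - C0 + (β * η + 1) * (∫ t in (0:ℝ)..tstar, α * CV t)
      + (η / κ) * (β + δ) * (∫ t in (0:ℝ)..tstar, α * CDV t) :=
  stmt_11_general ι α η κ β δ C CV CD CDV V D tstar C0 V0 D0 hC hCV hCD hCDV hV hD hC0 hCV0 hCD0
    hCDV0 hV0 hD0 hCt hCVt hCDt hCDVt
end

section
/- Under the assumptions of the previous integral identities (cells extinct at time t*, I_V + I_{DV} = C₀), and with B = η(1+β), κ = 1 + δ/(1+β), m = (V₀ + D₀)/C₀, the final viral loads satisfy V_f + D_f = (m − 2 + B)C₀ + I_V, and consequently (B + m − 2)C₀ ≤ V_f + D_f ≤ (B + m − 1)C₀. -/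
theorem stmt_12 (B β δ η κ C0 V0 D0 m IV IDV Vf Df : ℝ)
    (hC0 : 0 < C0) (hβ0 : 0 ≤ β) (hβ1 : β ≤ 1) (hδ : 0 < δ)
    (hB : B = η * (1 + β)) (hκ : κ = 1 + δ / (1 + β))
    (hm : m = (V0 + D0) / C0)
    (hIV0 : 0 ≤ IV) (hIDV0 : 0 ≤ IDV) (hsum : IV + IDV = C0)
    (hVf : Vf = V0 - C0 + η * IV + (η / κ) * IDV)
    (hDf : Df = D0 - C0 + (β * η + 1) * IV + (η / κ) * (β + δ) * IDV) :
    Vf + Df = (m - 2 + B) * C0 + IV ∧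
    (B + m - 2) * C0 ≤ Vf + Df ∧ Vf + Df ≤ (B + m - 1) * C0 := by
  have hβp : (0:ℝ) < 1 + β := by linarith
  have hden : (0:ℝ) < 1 + β + δ := by linarith
  have hκv : κ = (1 + β + δ) / (1 + β) := by
    rw [hκ]; field_simp
  have hκne : κ ≠ 0 := by
    rw [hκv]; positivity
  have hηκ : η / κ * (1 + β + δ) = B := by
    rw [hκv, hB]; field_simp
  have hmC : m * C0 = V0 + D0 := by
    rw [hm]; field_simp
  have key : Vf + Df = (m - 2 + B) * C0 + IV := by
    have : Vf + Df = V0 + D0 - 2 * C0 + (B + 1) * IV + (η / κ * (1 + β + δ)) * IDV := by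
      rw [hVf, hDf, hB]; ring
    rw [hηκ] at this
    linear_combination this - hmC + B * hsum
  refine ⟨key, ?_, ?_⟩ <;> rw [key] <;> nlinarith [hsum]
end

section
/- The Jacobian matrix of the HV–DVG vector field at the origin (0,0,0,0,0,0) has eigenvalue 0 with algebraic multiplicity 4 and eigenvalue −α with algebraic multiplicity 2, and both eigenvalues are semisimple. -/
lemma my_cons_val_five {α : Type*} {m : ℕ} (x : α) (u : Fin (m + 5) → α) :
    Matrix.vecCons x u 5 =
      Matrix.vecHead (Matrix.vecTail (Matrix.vecTail (Matrix.vecTail (Matrix.vecTail u)))) :=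
  rfl

set_option maxHeartbeats 1000000 in
open Polynomial in
theorem stmt_19 (ι α η κ β δ : ℝ)
    (hι : 0 < ι) (hα : 0 < α) (hη : 0 < η) (hκ : 0 < κ) (hβ : 0 < β) (hδ : 0 < δ) :
    let J : Matrix (Fin 6) (Fin 6) ℝ :=
      !![0, 0, 0, 0, 0, 0;
         0, -α, 0, 0, 0, 0;
         0, 0, 0, 0, 0, 0;
         0, 0, 0, -α, 0, 0;
         0, α * η, 0, α * η / κ, 0, 0;
         0, α * β * η, 0, α * η * (β + δ) / κ, 0, 0]
    Matrix.charpoly J = X ^ 4 * (X + C α) ^ 2 ∧ J * J = (-α) • J := by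
  intro J
  constructor
  · have hJ : J.BlockTriangular OrderDual.toDual := by
      intro i j hij
      fin_cases i <;> fin_cases j <;>
        first
          | exact absurd hij (by decide)
          | simp [J, my_cons_val_five, Matrix.vecHead, Matrix.vecTail]
    rw [Matrix.charpoly, Matrix.det_of_lowerTriangular _ hJ.charmatrix, Fin.prod_univ_six]
    simp [Matrix.charmatrix_apply, J, my_cons_val_five, Matrix.vecHead, Matrix.vecTail]
    ring
  · show J * J = _
    ext i j
    rw [Matrix.mul_apply, Fin.sum_univ_six]
    fin_cases i <;> fin_cases j <;>
      simp [J, my_cons_val_five, Matrix.vecHead, Matrix.vecTail] <;> ring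
end
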